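/- Rate-loss bound (single source, one receiver): let S^m be a random vector on G^m, Ŝ a reconstruction with (1/m)Σ_j E[d(S_j − Ŝ_j)] ≤ D, and U^m an i.i.d. vector independent of (S^m, Ŝ^m). Then I(S^m + U^m; S^m) − I(S^m + U^m; Ŝ^m) ≤ m·C(D, U). -/

import Mathlib

open MeasureTheory ProbabilityTheory

/-- Shannon entropy of a discrete (finite-alphabet) random variable. -/
noncomputable def entH {Ω A : Type*} [MeasurableSpace Ω] [Fintype A]
    (μ : Measure Ω) (X : Ω → A) : ℝ :=
  ∑ a : A, Real.negMulLog (μ (X ⁻¹' {a})).toReal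

/-- Mutual information I(X;Y). -/
noncomputable def mutInfo {Ω A B : Type*} [MeasurableSpace Ω] [Fintype A] [Fintype B]
    (μ : Measure Ω) (X : Ω → A) (Y : Ω → B) : ℝ :=
  entH μ X + entH μ Y - entH μ (fun ω => (X ω, Y ω))

/-- Conditional entropy H(X|Y). -/
noncomputable def condEnt {Ω A B : Type*} [MeasurableSpace Ω] [Fintype A] [Fintype B]
    (μ : Measure Ω) (X : Ω → A) (Y : Ω → B) : ℝ :=
  entH μ (fun ω => (X ω, Y ω)) - entH μ Y

/-- Conditional mutual information I(X;Y|Z). -/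
noncomputable def condMutInfo {Ω A B C : Type*} [MeasurableSpace Ω] [Fintype A] [Fintype B]
    [Fintype C] (μ : Measure Ω) (X : Ω → A) (Y : Ω → B) (Z : Ω → C) : ℝ :=
  entH μ (fun ω => (X ω, Z ω)) + entH μ (fun ω => (Y ω, Z ω))
    - entH μ (fun ω => (X ω, (Y ω, Z ω))) - entH μ Z

/-- A probability mass function on a finite alphabet, as a real-valued function. -/
def IsPMF {A : Type*} [Fintype A] (p : A → ℝ) : Prop :=
  (∀ a, 0 ≤ p a) ∧ ∑ a, p a = 1

/-- Shannon entropy of a pmf. -/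
noncomputable def pmfEntropy {A : Type*} [Fintype A] (p : A → ℝ) : ℝ :=
  ∑ a, Real.negMulLog (p a)

/-- I(X; X+N) for X ~ p independent of the additive noise N ~ q:
it equals H(X+N) − H(N). -/
noncomputable def addChannelInfo {G : Type*} [Fintype G] [AddCommGroup G]
    (p q : G → ℝ) : ℝ :=
  pmfEntropy (fun y => ∑ x, p x * q (y - x)) - pmfEntropy q

/-- C(D, N) = sup { I(X; X+N) : X ⊥ N, E[d(X)] ≤ D }, for noise N ~ q. -/
noncomputable def Cap {G : Type*} [Fintype G] [AddCommGroup G]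
    (d q : G → ℝ) (D : ℝ) : ℝ :=
  sSup { r | ∃ p : G → ℝ, IsPMF p ∧ (∑ x, p x * d x) ≤ D ∧ r = addChannelInfo p q }

section RLAux
set_option linter.unusedSectionVars false
open Real Finset

lemma gibbs_pointwise {x y : ℝ} (hx : 0 ≤ x) (hy : 0 ≤ y) (h0 : y = 0 → x = 0) :
    x - y ≤ x * Real.log x - x * Real.log y := by
  rcases eq_or_lt_of_le hx with h | hxpos
  · simp only [← h, zero_mul, sub_zero, zero_sub, sub_self]
    linarith
  · have hypos : 0 < y := by
      rcases eq_or_lt_of_le hy with h' | h'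
      · exact absurd (h0 h'.symm) (by linarith)
      · exact h'
    have hlog := Real.log_le_sub_one_of_pos (show (0:ℝ) < y / x by positivity)
    rw [Real.log_div hypos.ne' hxpos.ne'] at hlog
    have h2 := mul_le_mul_of_nonneg_left hlog hxpos.le
    have hxy : x * (y / x) = y := by field_simp
    nlinarith [h2, hxy]

lemma gibbs {A : Type*} [Fintype A] {P r : A → ℝ} (hP : ∀ a, 0 ≤ P a)
    (hr : ∀ a, 0 ≤ r a) (h0 : ∀ a, r a = 0 → P a = 0)
    (hPs : ∑ a, P a = 1) (hrs : ∑ a, r a = 1) :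
    pmfEntropy P ≤ -∑ a, P a * Real.log (r a) := by
  have key := Finset.sum_le_sum (fun a (_ : a ∈ univ) => gibbs_pointwise (hP a) (hr a) (h0 a))
  rw [Finset.sum_sub_distrib, Finset.sum_sub_distrib, hPs, hrs] at key
  simp only [pmfEntropy, Real.negMulLog_eq_neg, Finset.sum_neg_distrib]
  linarith

lemma pmf_le_one {A : Type*} [Fintype A] {p : A → ℝ} (hp : IsPMF p) (a : A) : p a ≤ 1 := by
  rw [← hp.2]
  exact Finset.single_le_sum (fun b _ => hp.1 b) (mem_univ a)

lemma pmfEntropy_nonneg {A : Type*} [Fintype A] {p : A → ℝ} (hp : IsPMF p) : 0 ≤ pmfEntropy p :=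
  Finset.sum_nonneg fun a _ => Real.negMulLog_nonneg (hp.1 a) (pmf_le_one hp a)

lemma pmfEntropy_le_log_card {A : Type*} [Fintype A] [Nonempty A] {p : A → ℝ} (hp : IsPMF p) :
    pmfEntropy p ≤ Real.log (Fintype.card A) := by
  have hN : (0:ℝ) < Fintype.card A := by
    exact_mod_cast Fintype.card_pos
  have h := gibbs (r := fun _ => (Fintype.card A : ℝ)⁻¹) hp.1 (fun _ => by positivity)
      (fun a ha => absurd ha (by positivity)) hp.2
      (by rw [Finset.sum_const, Finset.card_univ, nsmul_eq_mul]; exact mul_inv_cancel₀ hN.ne')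
  calc pmfEntropy p ≤ -∑ a, p a * Real.log ((Fintype.card A : ℝ)⁻¹) := h
    _ = Real.log (Fintype.card A) := by
        rw [Real.log_inv]
        simp only [mul_neg, Finset.sum_neg_distrib, neg_neg, ← Finset.sum_mul, hp.2, one_mul]

lemma conv_isPMF {G : Type*} [Fintype G] [AddCommGroup G] {p q : G → ℝ}
    (hp : IsPMF p) (hq : IsPMF q) : IsPMF (fun y => ∑ x, p x * q (y - x)) := by
  constructor
  · intro y; exact Finset.sum_nonneg fun x _ => mul_nonneg (hp.1 x) (hq.1 _)
  · have h1 : ∀ x : G, ∑ y, q (y - x) = 1 := fun x => by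
      rw [← hq.2]; exact Fintype.sum_equiv (Equiv.subRight x) _ _ fun y => rfl
    rw [Finset.sum_comm]
    simp_rw [← Finset.mul_sum]
    simp only [h1, mul_one]
    exact hp.2

lemma negMulLog_prod {ι : Type*} [Fintype ι] [DecidableEq ι] (f : ι → ℝ) :
    Real.negMulLog (∏ i, f i)
      = ∑ j, (∏ k ∈ Finset.univ.erase j, f k) * Real.negMulLog (f j) := by
  by_cases h : ∃ j, f j = 0
  · obtain ⟨j, hj⟩ := h
    rw [Finset.prod_eq_zero (mem_univ j) hj, Real.negMulLog_zero]
    symm; apply Finset.sum_eq_zero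
    intro k _
    by_cases hk : k = j
    · subst hk; simp [hj]
    · rw [Finset.prod_eq_zero (Finset.mem_erase.mpr ⟨Ne.symm hk, mem_univ j⟩) hj, zero_mul]
  · push_neg at h
    rw [Real.negMulLog_eq_neg]
    simp only []
    rw [Real.log_prod (fun j _ => h j), Finset.mul_sum, ← Finset.sum_neg_distrib]
    refine Finset.sum_congr rfl fun j _ => ?_
    rw [← Finset.mul_prod_erase univ f (mem_univ j)]
    ring

variable {Ω : Type*} [MeasurableSpace Ω] {μ : Measure Ω} [IsProbabilityMeasure μ]

/-- The law (pmf) of a random variable. -/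
noncomputable def rlLaw {A : Type*} (μ : Measure Ω) (X : Ω → A) (a : A) : ℝ :=
  (μ (X ⁻¹' {a})).toReal

lemma rlLaw_nonneg {A : Type*} (X : Ω → A) (a : A) : 0 ≤ rlLaw μ X a :=
  ENNReal.toReal_nonneg

lemma rlLaw_eq_zero_iff {A : Type*} (X : Ω → A) (a : A) :
    rlLaw μ X a = 0 ↔ μ (X ⁻¹' {a}) = 0 := by
  rw [rlLaw, ENNReal.toReal_eq_zero_iff]
  simp [measure_ne_top μ _]

lemma entH_eq_sum {A : Type*} [Fintype A] (X : Ω → A) :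
    entH μ X = ∑ a, Real.negMulLog (rlLaw μ X a) := rfl

lemma rlLaw_sum_one {A : Type*} [Fintype A] [MeasurableSpace A] [MeasurableSingletonClass A]
    {X : Ω → A} (hX : Measurable X) : ∑ a, rlLaw μ X a = 1 := by
  simp only [rlLaw]
  rw [← ENNReal.toReal_sum (fun a _ => measure_ne_top μ _)]
  rw [sum_measure_preimage_singleton Finset.univ (fun b _ => hX (measurableSet_singleton b))]
  simp

lemma rlLaw_comp {A B : Type*} [Fintype A] [DecidableEq B]
    [MeasurableSpace A] [MeasurableSingletonClass A]
    {X : Ω → A} (hX : Measurable X) (f : A → B) (b : B) :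
    rlLaw μ (fun ω => f (X ω)) b
      = ∑ a ∈ Finset.univ.filter (fun a => f a = b), rlLaw μ X a := by
  have hset : (fun ω => f (X ω)) ⁻¹' {b}
      = ⋃ a ∈ (Finset.univ.filter fun a => f a = b), X ⁻¹' {a} := by
    ext ω
    simp only [Set.mem_preimage, Set.mem_singleton_iff, Set.mem_iUnion, Finset.mem_filter,
      Finset.mem_univ, true_and, exists_prop]
    constructor
    · intro h; exact ⟨X ω, h, rfl⟩
    · rintro ⟨a, ha, rfl⟩; exact ha
  have hdisj : (↑(Finset.univ.filter fun a => f a = b) : Set A).PairwiseDisjoint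
      (fun a => X ⁻¹' {a}) := by
    intro x _ y _ hxy
    simp only [Function.onFun, Set.disjoint_left, Set.mem_preimage, Set.mem_singleton_iff]
    intro ω h1 h2
    exact hxy (h1 ▸ h2 ▸ rfl)
  rw [rlLaw, hset, measure_biUnion_finset hdisj (fun a _ => hX (measurableSet_singleton a)),
    ENNReal.toReal_sum (fun a _ => measure_ne_top μ _)]
  rfl

lemma rlLaw_pair_indep {A B : Type*} [MeasurableSpace A] [MeasurableSpace B]
    [MeasurableSingletonClass A] [MeasurableSingletonClass B]
    {V : Ω → A} {W : Ω → B} (h : IndepFun V W μ) (a : A) (b : B) :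
    rlLaw μ (fun ω => (V ω, W ω)) (a, b) = rlLaw μ V a * rlLaw μ W b := by
  have hset : (fun ω => (V ω, W ω)) ⁻¹' {(a,b)} = V ⁻¹' {a} ∩ W ⁻¹' {b} := by
    ext ω
    simp [Prod.ext_iff]
  rw [rlLaw, hset,
    h.measure_inter_preimage_eq_mul _ _ (measurableSet_singleton a) (measurableSet_singleton b),
    ENNReal.toReal_mul]
  rfl

lemma entH_comp_equiv {A B : Type*} [Fintype A] [Fintype B] (X : Ω → A) (e : A ≃ B) :
    entH μ (fun ω => e (X ω)) = entH μ X := by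
  unfold entH
  rw [← Equiv.sum_comp e (fun b => Real.negMulLog (μ ((fun ω => e (X ω)) ⁻¹' {b})).toReal)]
  refine Finset.sum_congr rfl fun a _ => ?_
  have h : (fun ω => e (X ω)) ⁻¹' {e a} = X ⁻¹' {a} := by
    ext ω; simp [e.injective.eq_iff]
  rw [h]

lemma entH_pair_indep {A B : Type*} [Fintype A] [Fintype B]
    [MeasurableSpace A] [MeasurableSpace B]
    [MeasurableSingletonClass A] [MeasurableSingletonClass B]
    {V : Ω → A} {W : Ω → B} (hV : Measurable V) (hW : Measurable W) (h : IndepFun V W μ) :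
    entH μ (fun ω => (V ω, W ω)) = entH μ V + entH μ W := by
  have hVs := rlLaw_sum_one (μ := μ) hV
  have hWs := rlLaw_sum_one (μ := μ) hW
  calc entH μ (fun ω => (V ω, W ω))
      = ∑ a, ∑ b, Real.negMulLog (rlLaw μ V a * rlLaw μ W b) := by
        rw [entH_eq_sum, Fintype.sum_prod_type]
        exact Finset.sum_congr rfl fun a _ => Finset.sum_congr rfl fun b _ => by
          rw [rlLaw_pair_indep h]
    _ = ∑ a, ((∑ b, rlLaw μ W b) * Real.negMulLog (rlLaw μ V a)
          + rlLaw μ V a * (∑ b, Real.negMulLog (rlLaw μ W b))) := by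
        refine Finset.sum_congr rfl fun a _ => ?_
        simp_rw [Real.negMulLog_mul]
        rw [Finset.sum_add_distrib, ← Finset.sum_mul, ← Finset.mul_sum]
    _ = entH μ V + entH μ W := by
        rw [hWs]
        simp only [one_mul]
        rw [Finset.sum_add_distrib, ← Finset.sum_mul, hVs, one_mul]
        rfl

lemma entH_pair_le {A B : Type*} [Fintype A] [Fintype B]
    [MeasurableSpace A] [MeasurableSpace B]
    [MeasurableSingletonClass A] [MeasurableSingletonClass B]
    {V : Ω → A} {W : Ω → B} (hV : Measurable V) (hW : Measurable W) :
    entH μ (fun ω => (V ω, W ω)) ≤ entH μ V + entH μ W := by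
  classical
  set P : A × B → ℝ := rlLaw μ (fun ω => (V ω, W ω)) with hPdef
  set va : A → ℝ := rlLaw μ V with hvadef
  set wb : B → ℝ := rlLaw μ W with hwbdef
  have hpair : Measurable (fun ω => (V ω, W ω)) := hV.prodMk hW
  -- marginals
  have hmargA : ∀ a, va a = ∑ b, P (a, b) := by
    intro a
    have h1 := rlLaw_comp (μ := μ) hpair Prod.fst a
    have h2 : (Finset.univ.filter fun p : A × B => p.1 = a)
        = {a} ×ˢ (Finset.univ : Finset B) := by
      ext p
      simp [Finset.mem_product, Prod.ext_iff, eq_comm]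
    rw [h2, Finset.sum_product, Finset.sum_singleton] at h1
    exact h1
  have hmargB : ∀ b, wb b = ∑ a, P (a, b) := by
    intro b
    have h1 := rlLaw_comp (μ := μ) hpair Prod.snd b
    have h2 : (Finset.univ.filter fun p : A × B => p.2 = b)
        = (Finset.univ : Finset A) ×ˢ {b} := by
      ext p
      simp [Finset.mem_product, Prod.ext_iff, eq_comm]
    rw [h2, Finset.sum_product] at h1
    simpa using h1
  have hva0 : ∀ a b, va a = 0 → P (a, b) = 0 := by
    intro a b h
    rw [hvadef, rlLaw_eq_zero_iff] at h
    rw [hPdef, rlLaw_eq_zero_iff]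
    refine measure_mono_null ?_ h
    intro ω hω
    simp only [Set.mem_preimage, Set.mem_singleton_iff, Prod.ext_iff] at hω ⊢
    exact hω.1
  have hwb0 : ∀ a b, wb b = 0 → P (a, b) = 0 := by
    intro a b h
    rw [hwbdef, rlLaw_eq_zero_iff] at h
    rw [hPdef, rlLaw_eq_zero_iff]
    refine measure_mono_null ?_ h
    intro ω hω
    simp only [Set.mem_preimage, Set.mem_singleton_iff, Prod.ext_iff] at hω ⊢
    exact hω.2
  have h0 : ∀ c : A × B, va c.1 * wb c.2 = 0 → P c = 0 := by
    rintro ⟨a, b⟩ h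
    rcases mul_eq_zero.mp h with h | h
    · exact hva0 a b h
    · exact hwb0 a b h
  have hgibbs := gibbs (P := P) (r := fun c => va c.1 * wb c.2)
      (fun c => rlLaw_nonneg _ c)
      (fun c => mul_nonneg (rlLaw_nonneg _ _) (rlLaw_nonneg _ _)) h0
      (rlLaw_sum_one hpair)
      (by
        rw [Fintype.sum_prod_type]
        simp_rw [← Finset.mul_sum]
        rw [← Finset.sum_mul, rlLaw_sum_one (μ := μ) hV, rlLaw_sum_one (μ := μ) hW, one_mul])
  have hsplit : ∀ c : A × B, P c * Real.log (va c.1 * wb c.2)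
      = P c * Real.log (va c.1) + P c * Real.log (wb c.2) := by
    intro c
    by_cases h : P c = 0
    · simp [h]
    · have h1 : va c.1 ≠ 0 := fun h' => h (h0 c (by rw [h', zero_mul]))
      have h2 : wb c.2 ≠ 0 := fun h' => h (h0 c (by rw [h', mul_zero]))
      rw [Real.log_mul h1 h2, mul_add]
  have hA : ∑ c : A × B, P c * Real.log (va c.1) = ∑ a, va a * Real.log (va a) := by
    rw [Fintype.sum_prod_type]
    refine Finset.sum_congr rfl fun a _ => ?_
    dsimp only
    rw [← Finset.sum_mul, ← hmargA]
  have hB : ∑ c : A × B, P c * Real.log (wb c.2) = ∑ b, wb b * Real.log (wb b) := by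
    rw [Fintype.sum_prod_type, Finset.sum_comm]
    refine Finset.sum_congr rfl fun b _ => ?_
    dsimp only
    rw [← Finset.sum_mul, ← hmargB]
  calc entH μ (fun ω => (V ω, W ω)) = pmfEntropy P := rfl
    _ ≤ -∑ c : A × B, P c * Real.log (va c.1 * wb c.2) := hgibbs
    _ = -(∑ c : A × B, P c * Real.log (va c.1)) - ∑ c : A × B, P c * Real.log (wb c.2) := by
        simp_rw [hsplit]
        rw [Finset.sum_add_distrib]
        ring
    _ = entH μ V + entH μ W := by
        rw [hA, hB, entH_eq_sum, entH_eq_sum]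
        simp_rw [Real.negMulLog_eq_neg, Finset.sum_neg_distrib]
        ring

lemma entH_pi_le {G : Type*} {m : ℕ} [Fintype G] [MeasurableSpace G]
    [MeasurableSingletonClass G]
    {X : Ω → (Fin m → G)} (hX : Measurable X) :
    entH μ X ≤ ∑ j, entH μ (fun ω => X ω j) := by
  classical
  set P : (Fin m → G) → ℝ := rlLaw μ X with hPdef
  set mj : Fin m → G → ℝ := fun j => rlLaw μ (fun ω => X ω j) with hmjdef
  have hmarg : ∀ j a, mj j a = ∑ v ∈ Finset.univ.filter (fun v : Fin m → G => v j = a), P v :=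
    fun j a => rlLaw_comp (μ := μ) hX (fun v => v j) a
  have hmj0 : ∀ j (v : Fin m → G), mj j (v j) = 0 → P v = 0 := by
    intro j v h
    rw [hmjdef] at h
    rw [rlLaw_eq_zero_iff] at h
    rw [hPdef, rlLaw_eq_zero_iff]
    refine measure_mono_null ?_ h
    intro ω hω
    simp only [Set.mem_preimage, Set.mem_singleton_iff] at hω ⊢
    rw [hω]
  have h0 : ∀ v : Fin m → G, (∏ j, mj j (v j)) = 0 → P v = 0 := by
    intro v h
    obtain ⟨j, _, hj⟩ := Finset.prod_eq_zero_iff.mp h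
    exact hmj0 j v hj
  have hmjsum : ∀ j, ∑ a, mj j a = 1 := by
    intro j
    exact rlLaw_sum_one (measurable_pi_apply j |>.comp hX)
  have hrs : ∑ v : Fin m → G, ∏ j, mj j (v j) = 1 := by
    rw [← Fintype.piFinset_univ, ← Finset.prod_univ_sum]
    simp only [hmjsum, Finset.prod_const_one]
  have hgibbs := gibbs (P := P) (r := fun v => ∏ j, mj j (v j))
      (fun v => rlLaw_nonneg _ _)
      (fun v => Finset.prod_nonneg fun j _ => rlLaw_nonneg _ _) h0
      (rlLaw_sum_one hX) hrs
  have hsplit : ∀ v : Fin m → G, P v * Real.log (∏ j, mj j (v j))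
      = ∑ j, P v * Real.log (mj j (v j)) := by
    intro v
    by_cases h : P v = 0
    · simp [h]
    · have hne : ∀ j, mj j (v j) ≠ 0 := fun j h' => h (hmj0 j v h')
      rw [Real.log_prod (fun j _ => hne j), Finset.mul_sum]
  have hgroup : ∀ j, ∑ v : Fin m → G, P v * Real.log (mj j (v j))
      = ∑ a, mj j a * Real.log (mj j a) := by
    intro j
    rw [← Finset.sum_fiberwise_of_maps_to (g := fun v : Fin m → G => v j)
      (fun v _ => Finset.mem_univ (v j)) (fun v => P v * Real.log (mj j (v j)))]
    refine Finset.sum_congr rfl fun a _ => ?_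
    have : ∀ v ∈ Finset.univ.filter (fun v : Fin m → G => v j = a),
        P v * Real.log (mj j (v j)) = P v * Real.log (mj j a) := by
      intro v hv
      rw [(Finset.mem_filter.mp hv).2]
    rw [Finset.sum_congr rfl this, ← Finset.sum_mul, ← hmarg]
  calc entH μ X = pmfEntropy P := rfl
    _ ≤ -∑ v : Fin m → G, P v * Real.log (∏ j, mj j (v j)) := hgibbs
    _ = -∑ j, ∑ v : Fin m → G, P v * Real.log (mj j (v j)) := by
        simp_rw [hsplit]
        rw [Finset.sum_comm]
    _ = ∑ j, entH μ (fun ω => X ω j) := by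
        rw [← Finset.sum_neg_distrib]
        refine Finset.sum_congr rfl fun j _ => ?_
        rw [hgroup j, entH_eq_sum]
        simp_rw [Real.negMulLog_eq_neg, Finset.sum_neg_distrib]
        rfl

lemma entH_pi_indep {G : Type*} {m : ℕ} [Fintype G] [MeasurableSpace G]
    [MeasurableSingletonClass G]
    {U : Fin m → Ω → G} (hU : ∀ j, Measurable (U j))
    (hind : iIndepFun U μ) :
    entH μ (fun ω => fun j => U j ω) = ∑ j, entH μ (U j) := by
  classical
  set x : Fin m → G → ℝ := fun j => rlLaw μ (U j) with hxdef
  have hxsum : ∀ j, ∑ a, x j a = 1 := fun j => rlLaw_sum_one (hU j)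
  have hlaw : ∀ v : Fin m → G, rlLaw μ (fun ω => fun j => U j ω) v = ∏ j, x j (v j) := by
    intro v
    have hset : (fun ω => fun j => U j ω) ⁻¹' {v} = ⋂ j ∈ (Finset.univ : Finset (Fin m)),
        U j ⁻¹' {v j} := by
      ext ω
      simp [funext_iff]
    have hprod := hind.measure_inter_preimage_eq_mul Finset.univ
      (sets := fun j => {v j}) (fun j _ => measurableSet_singleton (v j))
    rw [rlLaw, hset, hprod, ENNReal.toReal_prod]
    rfl
  have hterm : ∀ j (v : Fin m → G),
      (∏ k ∈ Finset.univ.erase j, x k (v k)) * Real.negMulLog (x j (v j))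
        = ∏ k, (fun k a => if k = j then Real.negMulLog (x k a) else x k a) k (v k) := by
    intro j v
    rw [← Finset.mul_prod_erase Finset.univ
      (fun k => (fun k a => if k = j then Real.negMulLog (x k a) else x k a) k (v k))
      (Finset.mem_univ j)]
    simp only [if_pos rfl]
    rw [mul_comm]
    congr 1
    refine Finset.prod_congr rfl fun k hk => ?_
    simp only [if_neg (Finset.mem_erase.mp hk).1]
  calc entH μ (fun ω => fun j => U j ω)
      = ∑ v : Fin m → G, Real.negMulLog (∏ j, x j (v j)) := by
        rw [entH_eq_sum]
        exact Finset.sum_congr rfl fun v _ => by rw [hlaw v]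
    _ = ∑ j, ∑ v : Fin m → G,
          ∏ k, (fun k a => if k = j then Real.negMulLog (x k a) else x k a) k (v k) := by
        simp_rw [negMulLog_prod, hterm]
        rw [Finset.sum_comm]
    _ = ∑ j, entH μ (U j) := by
        refine Finset.sum_congr rfl fun j _ => ?_
        have hps := Finset.prod_univ_sum (fun _ : Fin m => (Finset.univ : Finset G))
          (fun k a => if k = j then Real.negMulLog (x k a) else x k a)
        rw [Fintype.piFinset_univ] at hps
        rw [← hps]
        rw [← Finset.mul_prod_erase Finset.univ
          (fun k => ∑ a ∈ Finset.univ, (fun k a => if k = j then Real.negMulLog (x k a)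
            else x k a) k a)
          (Finset.mem_univ j)]
        have h1 : (∑ a ∈ Finset.univ,
            (fun k a => if k = j then Real.negMulLog (x k a) else x k a) j a)
            = entH μ (U j) := by
          simp [entH_eq_sum]
          rfl
        have herase : ∀ k ∈ Finset.univ.erase j,
            (∑ a ∈ Finset.univ,
              (fun k a => if k = j then Real.negMulLog (x k a) else x k a) k a) = 1 := by
          intro k hk
          simp only [if_neg (Finset.mem_erase.mp hk).1]
          exact hxsum k
        rw [h1, Finset.prod_congr rfl herase, Finset.prod_const_one, mul_one]

lemma rlLaw_add_indep {G : Type*} [Fintype G] [AddCommGroup G] [MeasurableSpace G]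
    [MeasurableSingletonClass G] [DecidableEq G]
    {E Un : Ω → G} (hE : Measurable E) (hUn : Measurable Un) (h : IndepFun E Un μ) (y : G) :
    rlLaw μ (fun ω => E ω + Un ω) y = ∑ x, rlLaw μ E x * rlLaw μ Un (y - x) := by
  have h1 : rlLaw μ (fun ω => E ω + Un ω) y
      = ∑ c ∈ Finset.univ.filter (fun c : G × G => c.1 + c.2 = y),
          rlLaw μ (fun ω => (E ω, Un ω)) c :=
    rlLaw_comp (hE.prodMk hUn) (fun c => c.1 + c.2) y
  have h2 : ∑ c ∈ Finset.univ.filter (fun c : G × G => c.1 + c.2 = y),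
        rlLaw μ (fun ω => (E ω, Un ω)) c
      = ∑ x : G, rlLaw μ (fun ω => (E ω, Un ω)) (x, y - x) := by
    refine Finset.sum_nbij' (i := fun c : G × G => c.1) (j := fun x : G => (x, y - x))
      ?_ ?_ ?_ ?_ ?_
    · intro c hc
      exact Finset.mem_univ _
    · intro x _
      simp only [Finset.mem_filter, Finset.mem_univ, true_and]
      abel
    · intro c hc
      have h3 := (Finset.mem_filter.mp hc).2
      have : y - c.1 = c.2 := by rw [← h3]; abel
      exact Prod.ext rfl this
    · intro x _
      rfl
    · intro c hc
      have h3 := (Finset.mem_filter.mp hc).2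
      have h4 : (c.1, y - c.1) = c := by
        have : y - c.1 = c.2 := by rw [← h3]; abel
        exact Prod.ext rfl this
      rw [h4]
  rw [h1, h2]
  exact Finset.sum_congr rfl fun xx _ => rlLaw_pair_indep h xx (y - xx)

lemma sum_pmfEntropy_le_avg {G : Type*} [Fintype G] {m : ℕ} (hm : 0 < m)
    (r : Fin m → G → ℝ) (hr : ∀ j, IsPMF (r j)) :
    ∑ j, pmfEntropy (r j) ≤ m * pmfEntropy (fun a => (∑ j, r j a) / (m : ℝ)) := by
  have hmR : (0:ℝ) < m := by exact_mod_cast hm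
  set rb : G → ℝ := fun a => (∑ j, r j a) / (m : ℝ) with hrbdef
  have hrbnn : ∀ a, 0 ≤ rb a := fun a =>
    div_nonneg (Finset.sum_nonneg fun j _ => (hr j).1 a) hmR.le
  have hrbsum : ∑ a, rb a = 1 := by
    simp only [hrbdef, ← Finset.sum_div]
    rw [Finset.sum_comm]
    have : ∀ j ∈ (Finset.univ : Finset (Fin m)), ∑ a, r j a = 1 := fun j _ => (hr j).2
    rw [Finset.sum_congr rfl this, Finset.sum_const, Finset.card_univ, Fintype.card_fin,
      nsmul_eq_mul, mul_one, div_self hmR.ne']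
  have h0 : ∀ j a, rb a = 0 → r j a = 0 := by
    intro j a h
    rw [hrbdef] at h
    have hsum0 : ∑ j', r j' a = 0 := by
      field_simp at h
      simpa using h
    exact (Finset.sum_eq_zero_iff_of_nonneg (fun j' _ => (hr j').1 a)).mp hsum0 j
      (Finset.mem_univ j)
  have hgibbs : ∀ j, pmfEntropy (r j) ≤ -∑ a, r j a * Real.log (rb a) := fun j =>
    gibbs (hr j).1 hrbnn (fun a => h0 j a) (hr j).2 hrbsum
  calc ∑ j, pmfEntropy (r j) ≤ ∑ j, -∑ a, r j a * Real.log (rb a) :=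
        Finset.sum_le_sum fun j _ => hgibbs j
    _ = -∑ a, (∑ j, r j a) * Real.log (rb a) := by
        rw [Finset.sum_neg_distrib, Finset.sum_comm]
        refine congrArg Neg.neg ?_
        refine Finset.sum_congr rfl fun a _ => ?_
        rw [Finset.sum_mul]
    _ = m * pmfEntropy rb := by
        unfold pmfEntropy
        rw [Finset.mul_sum, ← Finset.sum_neg_distrib]
        refine Finset.sum_congr rfl fun a _ => ?_
        have : (∑ j, r j a) = (m : ℝ) * rb a := by
          rw [hrbdef]
          field_simp
        rw [this, Real.negMulLog_eq_neg]
        ring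

lemma addChannelInfo_avg {G : Type*} [Fintype G] [AddCommGroup G] {m : ℕ} (hm : 0 < m)
    (p : Fin m → G → ℝ) (hp : ∀ j, IsPMF (p j)) (q : G → ℝ) (hq : IsPMF q) :
    ∑ j, addChannelInfo (p j) q
      ≤ m * addChannelInfo (fun x => (∑ j, p j x) / (m : ℝ)) q := by
  have hconv : (fun y => ∑ x, ((∑ j, p j x) / (m : ℝ)) * q (y - x))
      = fun y => (∑ j, (fun j => fun y => ∑ x, p j x * q (y - x)) j y) / (m : ℝ) := by
    funext y
    calc ∑ x, ((∑ j, p j x) / (m : ℝ)) * q (y - x)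
        = ∑ x, (∑ j, p j x * q (y - x)) / (m : ℝ) := by
          refine Finset.sum_congr rfl fun x _ => ?_
          rw [div_mul_eq_mul_div, Finset.sum_mul]
      _ = (∑ x, ∑ j, p j x * q (y - x)) / (m : ℝ) := by rw [Finset.sum_div]
      _ = (∑ j, ∑ x, p j x * q (y - x)) / (m : ℝ) := by rw [Finset.sum_comm]
  have hr : ∀ j, IsPMF ((fun j => fun y => ∑ x, p j x * q (y - x)) j) := fun j =>
    conv_isPMF (hp j) hq
  have h1 := sum_pmfEntropy_le_avg hm (fun j => fun y => ∑ x, p j x * q (y - x)) hr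
  unfold addChannelInfo
  rw [Finset.sum_sub_distrib, Finset.sum_const, Finset.card_univ, Fintype.card_fin,
    nsmul_eq_mul, mul_sub, hconv]
  linarith

lemma addChannelInfo_le_Cap {G : Type*} [Fintype G] [AddCommGroup G] (d q : G → ℝ) (D : ℝ)
    {p : G → ℝ} (hp : IsPMF p) (hq : IsPMF q) (hdist : ∑ x, p x * d x ≤ D) :
    addChannelInfo p q ≤ Cap d q D := by
  have hne : Nonempty G := ⟨0⟩
  apply le_csSup
  · refine ⟨Real.log (Fintype.card G), ?_⟩
    rintro r ⟨p', hp', _, rfl⟩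
    have h1 := pmfEntropy_le_log_card (conv_isPMF hp' hq)
    have h2 := pmfEntropy_nonneg hq
    unfold addChannelInfo
    linarith
  · exact ⟨p, hp, hdist, rfl⟩

end RLAux

/-- rate-loss bound, single source, one receiver: let S^m be a random vector
on G^m, Ŝ^m a reconstruction with average expected difference distortion at most D, and
U^m an i.i.d. vector (common law q) independent of (S^m, Ŝ^m). Then
I(S^m + U^m; S^m) − I(S^m + U^m; Ŝ^m) ≤ m·C(D, U). -/
theorem stmt11 {Ω G : Type*} [MeasurableSpace Ω] [MeasurableSpace G]
    [MeasurableSingletonClass G] [Fintype G] [AddCommGroup G]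
    (μ : Measure Ω) [IsProbabilityMeasure μ] (m : ℕ) (hm : 0 < m)
    (d : G → ℝ) (hd : ∀ x, 0 ≤ d x)
    (q : G → ℝ) (hq : IsPMF q)
    (S Shat U : Fin m → Ω → G)
    (hSmeas : ∀ j, Measurable (S j)) (hShatmeas : ∀ j, Measurable (Shat j))
    (hUmeas : ∀ j, Measurable (U j))
    (hUindep : iIndepFun U μ)
    (hUlaw : ∀ j x, (μ (U j ⁻¹' {x})).toReal = q x)
    (hUSS : IndepFun (fun ω => fun j => U j ω)
      (fun ω => (fun j => S j ω, fun j => Shat j ω)) μ)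
    (D : ℝ)
    (hdist : (1 / m : ℝ) * ∑ j, ∑ g,
      (μ {ω | S j ω - Shat j ω = g}).toReal * d g ≤ D) :
    mutInfo μ (fun ω => fun j => S j ω + U j ω) (fun ω => fun j => S j ω)
      - mutInfo μ (fun ω => fun j => S j ω + U j ω) (fun ω => fun j => Shat j ω)
      ≤ m * Cap d q D := by
  classical
  set Ytup : Ω → (Fin m → G) := fun ω => fun j => S j ω + U j ω with hYdef
  set Stup : Ω → (Fin m → G) := fun ω => fun j => S j ω with hSdef
  set Shtup : Ω → (Fin m → G) := fun ω => fun j => Shat j ω with hShdef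
  set Utup : Ω → (Fin m → G) := fun ω => fun j => U j ω with hUdef
  set Wtup : Ω → (Fin m → G) := fun ω => fun j => (S j ω - Shat j ω) + U j ω with hWdef
  have hop : ∀ (f g : Ω → G), Measurable f → Measurable g → ∀ (op : G → G → G),
      Measurable fun ω => op (f ω) (g ω) := fun f g hf hg op =>
    (measurable_of_countable (fun c : G × G => op c.1 c.2)).comp (hf.prodMk hg)
  have hYm : Measurable Ytup :=
    measurable_pi_lambda _ (fun j => hop _ _ (hSmeas j) (hUmeas j) (· + ·))
  have hSm : Measurable Stup := measurable_pi_lambda _ hSmeas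
  have hShm : Measurable Shtup := measurable_pi_lambda _ hShatmeas
  have hUm : Measurable Utup := measurable_pi_lambda _ hUmeas
  have hEm : ∀ j, Measurable (fun ω => S j ω - Shat j ω) := fun j =>
    hop _ _ (hSmeas j) (hShatmeas j) (· - ·)
  have hWm : Measurable Wtup :=
    measurable_pi_lambda _ (fun j => hop _ _ (hEm j) (hUmeas j) (· + ·))
  let e : ((Fin m → G) × (Fin m → G)) ≃ ((Fin m → G) × (Fin m → G)) :=
    { toFun := fun c => (c.1 - c.2, c.2)
      invFun := fun c => (c.1 + c.2, c.2)
      left_inv := fun c => by simp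
      right_inv := fun c => by simp }
  -- Step A : H(Y,S) = H(U) + H(S)
  have hUS : IndepFun Utup Stup μ := by
    have h := hUSS.comp (φ := id) (ψ := Prod.fst) measurable_id measurable_fst
    exact h
  have hA : entH μ (fun ω => (Ytup ω, Stup ω)) = entH μ Utup + entH μ Stup := by
    have h1 : (fun ω => e ((Ytup ω, Stup ω))) = fun ω => (Utup ω, Stup ω) := by
      funext ω
      refine Prod.ext ?_ rfl
      funext j
      show Ytup ω j - Stup ω j = Utup ω j
      simp [hYdef, hSdef, hUdef]
    calc entH μ (fun ω => (Ytup ω, Stup ω))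
        = entH μ (fun ω => e ((Ytup ω, Stup ω))) := (entH_comp_equiv _ e).symm
      _ = entH μ (fun ω => (Utup ω, Stup ω)) := by rw [h1]
      _ = entH μ Utup + entH μ Stup := entH_pair_indep hUm hSm hUS
  -- Step B : H(Y,Ŝ) ≤ H(W) + H(Ŝ)
  have hB : entH μ (fun ω => (Ytup ω, Shtup ω)) ≤ entH μ Wtup + entH μ Shtup := by
    have h1 : (fun ω => e ((Ytup ω, Shtup ω))) = fun ω => (Wtup ω, Shtup ω) := by
      funext ω
      refine Prod.ext ?_ rfl
      funext j
      show Ytup ω j - Shtup ω j = Wtup ω j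
      simp only [hYdef, hWdef, hShdef]
      abel
    calc entH μ (fun ω => (Ytup ω, Shtup ω))
        = entH μ (fun ω => e ((Ytup ω, Shtup ω))) := (entH_comp_equiv _ e).symm
      _ = entH μ (fun ω => (Wtup ω, Shtup ω)) := by rw [h1]
      _ ≤ entH μ Wtup + entH μ Shtup := entH_pair_le hWm hShm
  have hI1 : mutInfo μ Ytup Stup = entH μ Ytup - entH μ Utup := by
    unfold mutInfo
    rw [hA]
    ring
  have hI2 : entH μ Ytup - entH μ Wtup ≤ mutInfo μ Ytup Shtup := by
    unfold mutInfo
    linarith [hB]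
  -- Step C : subadditivity for W
  have hC : entH μ Wtup ≤ ∑ j, entH μ (fun ω => Wtup ω j) := entH_pi_le hWm
  -- laws
  set p : Fin m → G → ℝ := fun j => rlLaw μ (fun ω => S j ω - Shat j ω) with hpdef
  have hppmf : ∀ j, IsPMF (p j) := fun j =>
    ⟨fun a => rlLaw_nonneg _ _, rlLaw_sum_one (hEm j)⟩
  have hrlU : ∀ j, rlLaw μ (U j) = q := fun j => funext (fun xx => hUlaw j xx)
  have hEindep : ∀ j, IndepFun (fun ω => S j ω - Shat j ω) (U j) μ := by
    intro j
    have h := hUSS.symm.comp (φ := fun c : (Fin m → G) × (Fin m → G) => c.1 j - c.2 j)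
      (ψ := fun v : Fin m → G => v j) (measurable_of_countable _)
      (measurable_pi_apply j : Measurable fun v : Fin m → G => v j)
    exact h
  have hWj : ∀ j, entH μ (fun ω => Wtup ω j)
      = pmfEntropy (fun y => ∑ x, p j x * q (y - x)) := by
    intro j
    have hlaw : ∀ y, rlLaw μ (fun ω => (S j ω - Shat j ω) + U j ω) y
        = ∑ x, p j x * q (y - x) := by
      intro y
      have h := rlLaw_add_indep (hEm j) (hUmeas j) (hEindep j) y
      simpa [hpdef, hrlU j] using h
    rw [show (fun ω => Wtup ω j) = (fun ω => (S j ω - Shat j ω) + U j ω) from rfl]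
    rw [entH_eq_sum]
    unfold pmfEntropy
    exact Finset.sum_congr rfl fun y _ => by rw [hlaw y]
  -- H(U) = m * H(q)
  have hHU : entH μ Utup = m * pmfEntropy q := by
    have h1 : entH μ Utup = ∑ j, entH μ (U j) := entH_pi_indep hUmeas hUindep
    have h2 : ∀ j : Fin m, entH μ (U j) = pmfEntropy q := by
      intro j
      rw [entH_eq_sum, hrlU j]
      rfl
    rw [h1, Finset.sum_congr rfl (fun j _ => h2 j), Finset.sum_const, Finset.card_univ,
      Fintype.card_fin, nsmul_eq_mul]
  -- the averaged pmf
  have hmR : (0:ℝ) < m := by exact_mod_cast hm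
  set pbar : G → ℝ := fun x => (∑ j, p j x) / (m : ℝ) with hpbardef
  have hpbar : IsPMF pbar := by
    constructor
    · intro a
      exact div_nonneg (Finset.sum_nonneg fun j _ => (hppmf j).1 a) hmR.le
    · simp only [hpbardef, ← Finset.sum_div]
      rw [Finset.sum_comm]
      rw [Finset.sum_congr rfl (fun j (_ : j ∈ Finset.univ) => (hppmf j).2), Finset.sum_const,
        Finset.card_univ, Fintype.card_fin, nsmul_eq_mul, mul_one, div_self hmR.ne']
  have hdistbar : ∑ x, pbar x * d x ≤ D := by
    have hdist' : (1 / m : ℝ) * ∑ j, ∑ g, p j g * d g ≤ D := hdist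
    have heq : ∑ x, pbar x * d x = (1 / m : ℝ) * ∑ j, ∑ g, p j g * d g := by
      calc ∑ x, pbar x * d x
          = ∑ x, (∑ j, p j x * d x) / (m : ℝ) := by
            refine Finset.sum_congr rfl fun x _ => ?_
            simp only [hpbardef]
            rw [div_mul_eq_mul_div, Finset.sum_mul]
        _ = (∑ j, ∑ x, p j x * d x) / (m : ℝ) := by rw [← Finset.sum_div, Finset.sum_comm]
        _ = (1 / m : ℝ) * ∑ j, ∑ g, p j g * d g := by rw [one_div, inv_mul_eq_div]
    rw [heq]
    exact hdist'
  have hkey : ∑ j, addChannelInfo (p j) q ≤ m * addChannelInfo pbar q :=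
    addChannelInfo_avg hm p hppmf q hq
  have hcap : addChannelInfo pbar q ≤ Cap d q D :=
    addChannelInfo_le_Cap d q D hpbar hq hdistbar
  have hACI : ∑ j, addChannelInfo (p j) q
      = (∑ j, pmfEntropy (fun y => ∑ x, p j x * q (y - x))) - m * pmfEntropy q := by
    unfold addChannelInfo
    rw [Finset.sum_sub_distrib, Finset.sum_const, Finset.card_univ, Fintype.card_fin,
      nsmul_eq_mul]
  have hsum : ∑ j, entH μ (fun ω => Wtup ω j)
      = ∑ j, pmfEntropy (fun y => ∑ x, p j x * q (y - x)) :=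
    Finset.sum_congr rfl fun j _ => hWj j
  have hfin : m * addChannelInfo pbar q ≤ m * Cap d q D :=
    mul_le_mul_of_nonneg_left hcap hmR.le
  linarith
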